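/- Let X be the even shift. Then the singleton {ξ_{1^∞}} (where 1^∞ = 1111… is the constant word) is an open subset of Ω_X, and ξ_{1^∞} is a fixed point of the spectral partial action: for g the generator of 𝔽 corresponding to the letter 1, g⁻¹ ∈ ξ_{1^∞} and g·ξ_{1^∞} = ξ_{1^∞}. Consequently, the spectral partial action associated to the even shift is not topologically free. -/

import Mathlib

open scoped Classical

namespace SubshiftPaper

variable {Λ : Type}

/-- The left shift on infinite words. -/
def shiftMap (x : ℕ → Λ) : ℕ → Λ := fun n => x (n + 1)

/-- Concatenation of a finite word with an infinite word. -/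
def cat (α : List Λ) (y : ℕ → Λ) : ℕ → Λ := fun n => α.getD n (y (n - α.length))

/-- `α` is a prefix of the infinite word `x`. -/
def Pref (α : List Λ) (x : ℕ → Λ) : Prop := ∀ (i : ℕ) (h : i < α.length), x i = α[i]

/-- The tail of `x` after `n` letters. -/
def tail (x : ℕ → Λ) (n : ℕ) : ℕ → Λ := fun i => x (n + i)

/-- `α` occurs in `x` at position `n`. -/
def OccursAt (α : List Λ) (x : ℕ → Λ) (n : ℕ) : Prop :=
  ∀ (i : ℕ) (h : i < α.length), x (n + i) = α[i]

/-- `α` occurs in `x` (as a contiguous block of letters). -/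
def Occurs (α : List Λ) (x : ℕ → Λ) : Prop := ∃ n, OccursAt α x n

/-- `X` is a subshift: a nonempty closed shift-invariant subset. -/
def IsSubshift [TopologicalSpace Λ] (X : Set (ℕ → Λ)) : Prop :=
  X.Nonempty ∧ IsClosed X ∧ ∀ x ∈ X, shiftMap x ∈ X

/-- The set of infinite words avoiding all words in `F`. -/
def ForbidSpace (F : Set (List Λ)) : Set (ℕ → Λ) := {x | ∀ α ∈ F, ¬ Occurs α x}

/-- `X` is a subshift of finite type. -/
def IsSFT (X : Set (ℕ → Λ)) : Prop := ∃ F : Set (List Λ), F.Finite ∧ X = ForbidSpace F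

/-- The follower set of a finite word. -/
def follower (X : Set (ℕ → Λ)) (α : List Λ) : Set (ℕ → Λ) := {y | y ∈ X ∧ cat α y ∈ X}

/-- The cylinder of a finite word. -/
def cylinder (X : Set (ℕ → Λ)) (α : List Λ) : Set (ℕ → Λ) := {x | x ∈ X ∧ Pref α x}

/-- The language of `X`. -/
def Language (X : Set (ℕ → Λ)) : Set (List Λ) := {α | ∃ x ∈ X, Occurs α x}

/-- The embedding of finite words into the free group. -/
def wd (α : List Λ) : FreeGroup Λ := (α.map FreeGroup.of).prod

/-- Indicator function of a set of group elements. -/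
noncomputable def chi (s : Set (FreeGroup Λ)) : FreeGroup Λ → Bool :=
  fun g => if g ∈ s then true else false

/-- The set `ξ_x ⊆ 𝔽`. -/
def xiSet [DecidableEq Λ] (X : Set (ℕ → Λ)) (x : ℕ → Λ) : Set (FreeGroup Λ) :=
  {g | ∃ α β : List Λ, g = wd α * (wd β)⁻¹ ∧
        FreeGroup.norm g = α.length + β.length ∧
        Pref α x ∧ tail x α.length ∈ follower X α ∩ follower X β}

/-- `ξ_x` as an element of `2^𝔽`. -/
noncomputable def xiB [DecidableEq Λ] (X : Set (ℕ → Λ)) (x : ℕ → Λ) : FreeGroup Λ → Bool :=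
  chi (xiSet X x)

/-- The spectrum `Ω_X`: the closure of `{ξ_x : x ∈ X}` in `2^𝔽`. -/
noncomputable def Omega [DecidableEq Λ] (X : Set (ℕ → Λ)) : Set (FreeGroup Λ → Bool) :=
  closure ((fun x => xiB X x) '' X)

/-- Left translation of an element of `2^𝔽`. -/
def translate (g : FreeGroup Λ) (ξ : FreeGroup Λ → Bool) : FreeGroup Λ → Bool :=
  fun h => ξ (g⁻¹ * h)

/-- `x` is the stem of `ξ`: `ξ ∩ 𝔽₊` is exactly the set of prefixes of `x`. -/
def IsStem (ξ : FreeGroup Λ → Bool) (x : ℕ → Λ) : Prop :=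
  {g | ξ g = true} ∩ {g | ∃ α : List Λ, g = wd α} =
    {g | ∃ α : List Λ, g = wd α ∧ Pref α x}

/-- `x` is the stem of `ξ` at `g`: `ξ ∩ g𝔽₊ = {gα : α is a prefix of x}`. -/
def IsStemAt (ξ : FreeGroup Λ → Bool) (g : FreeGroup Λ) (x : ℕ → Λ) : Prop :=
  {h | ξ h = true} ∩ {h | ∃ α : List Λ, h = g * wd α} =
    {h | ∃ α : List Λ, h = g * wd α ∧ Pref α x}

/-- The orbit of `ξ` under the spectral partial action. -/
def Orbit (ξ : FreeGroup Λ → Bool) : Set (FreeGroup Λ → Bool) :=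
  {η | ∃ g : FreeGroup Λ, ξ g⁻¹ = true ∧ η = translate g ξ}

/-- Topological freeness of the spectral partial action. -/
noncomputable def TopFree [DecidableEq Λ] (X : Set (ℕ → Λ)) : Prop :=
  ∀ g : FreeGroup Λ, g ≠ 1 →
    ∀ U : Set (FreeGroup Λ → Bool), IsOpen U →
      (U ∩ Omega X ⊆ {ξ | ξ g⁻¹ = true ∧ translate g ξ = ξ}) → U ∩ Omega X = ∅

/-- The periodic infinite word `γ^∞`. -/
noncomputable def perInf [Nonempty Λ] (γ : List Λ) : ℕ → Λ :=
  fun n => γ.getD (n % γ.length) (Classical.arbitrary Λ)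

/-- `n`-fold concatenation of a finite word with itself. -/
def rep : ℕ → List Λ → List Λ
  | 0, _ => []
  | n + 1, γ => γ ++ rep n γ

/-- `γ` is a circuit relative to `X`. -/
noncomputable def IsCircuit [Nonempty Λ] (X : Set (ℕ → Λ)) (γ : List Λ) : Prop :=
  γ ≠ [] ∧ perInf γ ∈ X

/-- `y` is an exit for the circuit `γ`. -/
noncomputable def IsExit [Nonempty Λ] (X : Set (ℕ → Λ)) (γ : List Λ) (y : ℕ → Λ) : Prop :=
  y ≠ perInf γ ∧ cat γ y ∈ X

/-- `z` is a strong exit for the circuit `γ`. -/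
noncomputable def IsStrongExit [Nonempty Λ] (X : Set (ℕ → Λ)) (γ : List Λ) (z : ℕ → Λ) : Prop :=
  z ≠ perInf γ ∧ ∀ n : ℕ, cat (rep n γ) z ∈ X

/-- The sets `X_g` of the standard partial action. -/
def Xg [DecidableEq Λ] (X : Set (ℕ → Λ)) (g : FreeGroup Λ) : Set (ℕ → Λ) :=
  {x | ∃ α β : List Λ, g = wd α * (wd β)⁻¹ ∧
        FreeGroup.norm g = α.length + β.length ∧
        ∃ y ∈ follower X α ∩ follower X β, x = cat α y}

/-- `x` is a fixed point for `θ_g`. -/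
def IsThetaFixed [DecidableEq Λ] (X : Set (ℕ → Λ)) (g : FreeGroup Λ) (x : ℕ → Λ) : Prop :=
  ∃ α β : List Λ, g = wd α * (wd β)⁻¹ ∧
    FreeGroup.norm g = α.length + β.length ∧
    ∃ y ∈ follower X α ∩ follower X β, x = cat β y ∧ cat α y = x

/-- `x` may be collectively reached from the finite set `B`. -/
def CollReached (X : Set (ℕ → Λ)) (B : Finset (List Λ)) (x : ℕ → Λ) : Prop :=
  ∃ α γ : List Λ, Pref α x ∧ ∀ β ∈ B, cat (β ++ γ) (tail x α.length) ∈ X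

/-- `X` is collectively cofinal. -/
def CollCofinal (X : Set (ℕ → Λ)) : Prop :=
  ∀ B : Finset (List Λ), ↑B ⊆ Language X → (⋂ β ∈ B, follower X β).Nonempty →
    ∀ x ∈ X, CollReached X B x

/-- `X` is strongly cofinal. -/
def StrongCofinal (X : Set (ℕ → Λ)) : Prop :=
  ∀ β ∈ Language X, ∃ M : ℕ, ∀ x ∈ X, ∃ α γ : List Λ, Pref α x ∧
    cat (β ++ γ) (tail x α.length) ∈ X ∧ α.length + γ.length ≤ M

/-- The even shift. -/
def evenShift : Set (ℕ → Fin 2) :=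
  ForbidSpace {w | ∃ n : ℕ, w = 0 :: (List.replicate (2 * n + 1) 1 ++ [0])}

/-!
In any subshift `X` containing a constant word `a^∞`, the configuration `ξ_{a^∞}` is exactly the
set of elements `aⁿ β⁻¹` (`n ∈ ℤ`) of the free group with `β a^∞ ∈ X`, a set visibly invariant
under left multiplication by `a`; so `ξ_{a^∞}` is a fixed point of the generator `a`.

For the even shift, `ξ_{1^∞}` is moreover isolated in `Ω_X`. If `1·0⁻¹` and `1²·0⁻¹` both lie
in `ξ_x`, then `x` starts with `11` and both `0 x₁ x₂ …` and `0 x₂ x₃ …` lie in `X`; a first `0`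
of `x`, at position `k ≥ 2`, would then produce the blocks `0 1^(k-1) 0` and `0 1^(k-2) 0`,
one of which is forbidden. An isolated fixed point is a nonempty open set of fixed points.
-/

end SubshiftPaper

namespace FreeGroup

variable {α : Type*} [DecidableEq α]

theorem toWord_mk_of_norm {L : List (α × Bool)} (h : norm (mk L) = L.length) :
    (mk L).toWord = L := by
  rw [norm, toWord_mk] at h
  rw [toWord_mk]
  exact reduce.red.sublist.eq_of_length h

theorem norm_mk_eq_length_iff {L : List (α × Bool)} : norm (mk L) = L.length ↔ IsReduced L :=
  ⟨fun h => toWord_mk_of_norm h ▸ isReduced_toWord, fun h => by rw [norm, toWord_mk, h.reduce_eq]⟩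

end FreeGroup

theorem IsOpen.inter_closure_eq_singleton {X : Type*} [TopologicalSpace X] [T1Space X]
    {U S : Set X} {p : X} (hU : IsOpen U) (h : U ∩ S = {p}) : U ∩ closure S = {p} := by
  refine Set.Subset.antisymm ?_ ?_
  · calc U ∩ closure S ⊆ closure (U ∩ S) := hU.inter_closure
      _ = {p} := by rw [h, closure_singleton]
  · have hp : p ∈ U ∩ S := by rw [h]; rfl
    exact Set.singleton_subset_iff.mpr ⟨hp.1, subset_closure hp.2⟩

namespace SubshiftPaper

variable {Λ : Type}

def mulInvWord (α β : List Λ) : List (Λ × Bool) :=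
  α.map (·, true) ++ (β.map (·, false)).reverse

theorem length_mulInvWord (α β : List Λ) : (mulInvWord α β).length = α.length + β.length := by
  simp [mulInvWord]

theorem mulInvWord_injective {α β γ δ : List Λ} (h : mulInvWord α β = mulInvWord γ δ) :
    α = γ ∧ β = δ := by
  have hpos := congrArg (List.filterMap fun p : Λ × Bool => if p.2 then some p.1 else none) h
  have hneg := congrArg (List.filterMap fun p : Λ × Bool => if p.2 then none else some p.1) h
  simp [mulInvWord, List.filterMap_map] at hpos hneg
  exact ⟨hpos, hneg⟩

theorem wd_append (α β : List Λ) : wd (α ++ β) = wd α * wd β := by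
  simp [wd]

theorem wd_replicate (k : ℕ) (a : Λ) : wd (List.replicate k a) = FreeGroup.of a ^ k := by
  simp [wd]

theorem wd_eq_mk (α : List Λ) : wd α = FreeGroup.mk (α.map (·, true)) := by
  induction α with
  | nil => rfl
  | cons a α ih => simp only [wd, List.map_cons, List.prod_cons] at ih ⊢; rw [ih]; rfl

theorem wd_mul_inv_eq_mk (α β : List Λ) : wd α * (wd β)⁻¹ = FreeGroup.mk (mulInvWord α β) := by
  rw [wd_eq_mk, wd_eq_mk, FreeGroup.inv_mk, FreeGroup.mul_mk]
  simp [mulInvWord, FreeGroup.invRev, Function.comp_def]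

theorem isReduced_mulInvWord_iff {α β : List Λ} :
    FreeGroup.IsReduced (mulInvWord α β) ↔ ∀ a ∈ α.getLast?, ∀ b ∈ β.getLast?, a ≠ b := by
  have htriv {l : List Λ} : l.IsChain fun _ _ => True :=
    (List.pairwise_of_forall fun _ _ => trivial).isChain
  simp [mulInvWord, FreeGroup.IsReduced, List.isChain_append, List.isChain_map,
    List.isChain_reverse, htriv]

theorem cat_append (α β : List Λ) (y : ℕ → Λ) : cat (α ++ β) y = cat α (cat β y) := by
  funext n
  simp only [cat, List.length_append]
  by_cases h : n < α.length
  · rw [List.getD_append _ _ _ _ h, List.getD_eq_getElem _ _ h, List.getD_eq_getElem _ _ h]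
  · rw [List.getD_append_right _ _ _ _ (not_lt.mp h), List.getD_eq_default α _ (not_lt.mp h),
      Nat.sub_sub]

theorem cat_replicate_const (k : ℕ) (a : Λ) :
    cat (List.replicate k a) (fun _ => a) = fun _ => a := by
  funext n
  simp only [cat, List.getD_eq_getElem?_getD, List.getElem?_getD_replicate_default_eq]

theorem pref_const_iff {α : List Λ} {a : Λ} :
    Pref α (fun _ => a) ↔ α = List.replicate α.length a := by
  rw [List.eq_replicate_iff]
  simp [Pref, List.forall_mem_iff_getElem, eq_comm]

variable [DecidableEq Λ]

theorem norm_wd_mul_inv_eq_iff {α β : List Λ} :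
    (wd α * (wd β)⁻¹).norm = α.length + β.length ↔
      ∀ a ∈ α.getLast?, ∀ b ∈ β.getLast?, a ≠ b := by
  rw [wd_mul_inv_eq_mk, ← length_mulInvWord, FreeGroup.norm_mk_eq_length_iff,
    isReduced_mulInvWord_iff]

theorem norm_wd (α : List Λ) : (wd α).norm = α.length := by
  simpa [wd] using (norm_wd_mul_inv_eq_iff (α := α) (β := [])).mpr (by simp)

theorem eq_of_wd_mul_inv_eq {α β γ δ : List Λ} (h : wd α * (wd β)⁻¹ = wd γ * (wd δ)⁻¹)
    (hαβ : (wd α * (wd β)⁻¹).norm = α.length + β.length)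
    (hγδ : (wd γ * (wd δ)⁻¹).norm = γ.length + δ.length) : α = γ ∧ β = δ := by
  rw [wd_mul_inv_eq_mk, ← length_mulInvWord] at hαβ hγδ
  apply mulInvWord_injective
  rw [← FreeGroup.toWord_mk_of_norm hαβ, ← FreeGroup.toWord_mk_of_norm hγδ, ← wd_mul_inv_eq_mk,
    ← wd_mul_inv_eq_mk, h]

theorem xiB_eq_true_iff {X : Set (ℕ → Λ)} {x : ℕ → Λ} {g : FreeGroup Λ} :
    xiB X x g = true ↔ g ∈ xiSet X x := by
  simp [xiB, chi]

theorem wd_mul_inv_mem_xiSet_iff {X : Set (ℕ → Λ)} {x : ℕ → Λ} {α β : List Λ}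
    (h : (wd α * (wd β)⁻¹).norm = α.length + β.length) :
    wd α * (wd β)⁻¹ ∈ xiSet X x ↔ Pref α x ∧ tail x α.length ∈ follower X α ∩ follower X β := by
  refine ⟨fun ⟨γ, δ, hg, hγδ, hpref, htail⟩ => ?_, fun hx => ⟨α, β, rfl, h, hx⟩⟩
  obtain ⟨rfl, rfl⟩ := eq_of_wd_mul_inv_eq hg h (hg ▸ hγδ)
  exact ⟨hpref, htail⟩

theorem pow_mul_of_inv_mem_xiSet_iff {X : Set (ℕ → Λ)} {x : ℕ → Λ} {a b : Λ} (hab : a ≠ b)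
    (k : ℕ) :
    FreeGroup.of a ^ k * (FreeGroup.of b)⁻¹ ∈ xiSet X x ↔
      Pref (List.replicate k a) x ∧
        tail x k ∈ follower X (List.replicate k a) ∩ follower X [b] := by
  have hnorm : (wd (List.replicate k a) * (wd [b])⁻¹).norm = (List.replicate k a).length + 1 :=
    norm_wd_mul_inv_eq_iff.mpr (by simp [List.getLast?_replicate, hab])
  simpa [wd_replicate, wd] using wd_mul_inv_mem_xiSet_iff (X := X) (x := x) hnorm

theorem not_topFree_of_isolated_fixedPoint {X : Set (ℕ → Λ)} {U : Set (FreeGroup Λ → Bool)}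
    {ξ : FreeGroup Λ → Bool} {g : FreeGroup Λ} (hU : IsOpen U) (hUΩ : U ∩ Omega X = {ξ})
    (hg : g ≠ 1) (hdom : ξ g⁻¹ = true) (hfix : translate g ξ = ξ) : ¬ TopFree X := by
  intro hfree
  have hempty := hfree g hg U hU (by rw [hUΩ]; rintro _ rfl; exact ⟨hdom, hfix⟩)
  rw [hUΩ] at hempty
  exact Set.singleton_ne_empty ξ hempty

section ConstantWord

open FreeGroup

variable {X : Set (ℕ → Λ)} {a : Λ}

theorem pow_mul_inv_mem_xiSet_const_of_norm (hX : (fun _ => a) ∈ X) {k : ℕ} {β : List Λ}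
    (hβ : cat β (fun _ => a) ∈ X) (hnorm : (of a ^ k * (wd β)⁻¹).norm = k + β.length) :
    of a ^ k * (wd β)⁻¹ ∈ xiSet X (fun _ => a) := by
  rw [← wd_replicate] at hnorm ⊢
  rw [wd_mul_inv_mem_xiSet_iff (by simpa using hnorm)]
  refine ⟨pref_const_iff.mpr (by simp), ⟨hX, ?_⟩, hX, hβ⟩
  show cat _ (fun _ => a) ∈ X
  rwa [cat_replicate_const]

theorem pow_mul_inv_mem_xiSet_const (hX : (fun _ => a) ∈ X) (β : List Λ) (k : ℕ)
    (hβ : cat β (fun _ => a) ∈ X) : of a ^ k * (wd β)⁻¹ ∈ xiSet X (fun _ => a) := by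
  induction β using List.reverseRecOn generalizing k with
  | nil => exact pow_mul_inv_mem_xiSet_const_of_norm hX hβ (by simp [wd, norm_of_pow])
  | append_singleton β b ih =>
    by_cases hb : b = a
    · subst hb
      cases k with
      | zero =>
        refine pow_mul_inv_mem_xiSet_const_of_norm hX hβ ?_
        simp [norm_inv_eq, norm_wd]
      | succ k =>
        have hcat : cat (β ++ [b]) (fun _ => b) = cat β (fun _ => b) := by
          rw [cat_append, ← List.replicate_one, cat_replicate_const]
        have hg : of b ^ (k + 1) * (wd (β ++ [b]))⁻¹ = of b ^ k * (wd β)⁻¹ := by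
          rw [wd_append, ← List.replicate_one, wd_replicate]
          group
        rw [hg]
        exact ih k (hcat ▸ hβ)
    · refine pow_mul_inv_mem_xiSet_const_of_norm hX hβ ?_
      rw [← wd_replicate, norm_wd_mul_inv_eq_iff.mpr, List.length_replicate]
      simpa [List.getLast?_replicate] using fun _ => Ne.symm hb

theorem xiSet_const (hX : (fun _ => a) ∈ X) :
    xiSet X (fun _ => a) =
      {g | ∃ n : ℤ, ∃ β : List Λ, g = of a ^ n * (wd β)⁻¹ ∧ cat β (fun _ => a) ∈ X} := by
  ext g
  constructor
  · rintro ⟨α, β, rfl, -, hα, -, -, hβ⟩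
    refine ⟨α.length, β, ?_, hβ⟩
    rw [pref_const_iff.mp hα, wd_replicate, List.length_replicate, zpow_natCast]
  · rintro ⟨n, β, rfl, hβ⟩
    obtain ⟨k, rfl | rfl⟩ := n.eq_nat_or_neg
    · exact zpow_natCast (of a) k ▸ pow_mul_inv_mem_xiSet_const hX β k hβ
    · have hg : of a ^ (-(k : ℤ)) * (wd β)⁻¹ = of a ^ 0 * (wd (β ++ List.replicate k a))⁻¹ := by
        rw [wd_append, wd_replicate]
        group
      rw [hg]
      refine pow_mul_inv_mem_xiSet_const hX _ 0 ?_
      rwa [cat_append, cat_replicate_const]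

theorem of_inv_mem_xiSet_const (hX : (fun _ => a) ∈ X) : (of a)⁻¹ ∈ xiSet X (fun _ => a) := by
  rw [xiSet_const hX]
  exact ⟨-1, [], by simp [wd], hX⟩

theorem translate_of_xiB_const (hX : (fun _ => a) ∈ X) :
    translate (of a) (xiB X (fun _ => a)) = xiB X (fun _ => a) := by
  funext g
  suffices (of a)⁻¹ * g ∈ xiSet X (fun _ => a) ↔ g ∈ xiSet X (fun _ => a) by
    simp only [translate, xiB, chi, this]
  rw [xiSet_const hX]
  constructor
  · rintro ⟨n, β, hg, hβ⟩
    refine ⟨n + 1, β, ?_, hβ⟩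
    rw [inv_mul_eq_iff_eq_mul.mp hg]
    group
  · rintro ⟨n, β, rfl, hβ⟩
    exact ⟨n - 1, β, by group, hβ⟩

end ConstantWord

section EvenShift

open FreeGroup

theorem const_one_mem_evenShift : (fun _ => (1 : Fin 2)) ∈ evenShift := by
  rintro w ⟨n, rfl⟩ ⟨p, hp⟩
  simpa using hp 0 (by simp)

theorem cat_zero_const_one_mem_evenShift : cat [0] (fun _ => (1 : Fin 2)) ∈ evenShift := by
  rintro w ⟨n, rfl⟩ ⟨p, hp⟩
  have h0 := hp 0 (by simp)
  have hlast := hp (2 * n + 2) (by simp)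
  rcases p with _ | p
  · simp [cat] at hlast
  · simp [cat] at h0

theorem even_of_cat_zero_mem_evenShift {y : ℕ → Fin 2} (hy : cat [0] y ∈ evenShift) {k : ℕ}
    (hones : ∀ i < k, y i = 1) (hk : y k = 0) : Even k := by
  by_contra hodd
  obtain ⟨n, rfl⟩ := Nat.not_even_iff_odd.mp hodd
  refine hy _ ⟨n, rfl⟩ ⟨0, fun i hi => ?_⟩
  rcases i with _ | i
  · rfl
  · simp only [cat, zero_add, List.getD_cons_succ, List.getD_nil, List.getElem_cons_succ,
      List.getElem_append, List.getElem_replicate, List.length_replicate, List.length_singleton,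
      Nat.add_sub_cancel]
    split_ifs with h
    · exact hones i h
    · obtain rfl : i = 2 * n + 1 := by simp at hi; omega
      simpa using hk

theorem eq_const_one_of_cat_zero_mem_evenShift {x : ℕ → Fin 2} (hx0 : x 0 = 1) (hx1 : x 1 = 1)
    (h1 : cat [0] (tail x 1) ∈ evenShift) (h2 : cat [0] (tail x 2) ∈ evenShift) :
    x = fun _ => 1 := by
  by_contra hx
  obtain ⟨k, hk, hones⟩ : ∃ k, x k = 0 ∧ ∀ i < k, x i = 1 := by
    obtain ⟨n, hn⟩ := Function.ne_iff.mp hx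
    have hzero : ∃ n, x n = 0 := ⟨n, by omega⟩
    exact ⟨Nat.find hzero, Nat.find_spec hzero, fun i hi => by
      have := Nat.find_min hzero hi
      omega⟩
  have hk2 : 2 ≤ k := by
    by_contra! hlt
    interval_cases k <;> simp_all
  obtain ⟨r, hr⟩ := even_of_cat_zero_mem_evenShift h1 (k := k - 1)
    (fun i hi => hones (1 + i) (by omega)) (by simpa [tail, Nat.add_sub_cancel' (by omega : 1 ≤ k)])
  obtain ⟨s, hs⟩ := even_of_cat_zero_mem_evenShift h2 (k := k - 2)
    (fun i hi => hones (2 + i) (by omega)) (by simpa [tail, Nat.add_sub_cancel' hk2])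
  omega

def constOneNbhd : Set (FreeGroup (Fin 2) → Bool) :=
  {ξ | ξ (of 1 * (of 0)⁻¹) = true ∧ ξ (of 1 ^ 2 * (of 0)⁻¹) = true}

theorem isOpen_constOneNbhd : IsOpen constOneNbhd := by
  apply IsOpen.inter <;>
    exact (isOpen_discrete {true}).preimage (continuous_apply (A := fun _ => Bool) _)

theorem xiB_mem_constOneNbhd_iff {x : ℕ → Fin 2} :
    xiB evenShift x ∈ constOneNbhd ↔ x = fun _ => 1 := by
  simp only [constOneNbhd, Set.mem_ofPred_eq, xiB_eq_true_iff]
  constructor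
  · rintro ⟨h1, h2⟩
    rw [← pow_one (of 1), pow_mul_of_inv_mem_xiSet_iff (by decide)] at h1
    rw [pow_mul_of_inv_mem_xiSet_iff (by decide)] at h2
    exact eq_const_one_of_cat_zero_mem_evenShift (by simpa using h1.1 0) (by simpa using h2.1 1)
      h1.2.2.2 h2.2.2.2
  · rintro rfl
    rw [xiSet_const const_one_mem_evenShift]
    exact ⟨⟨1, [0], by simp [wd], cat_zero_const_one_mem_evenShift⟩,
      ⟨2, [0], by simp [wd], cat_zero_const_one_mem_evenShift⟩⟩

theorem constOneNbhd_inter_omega :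
    constOneNbhd ∩ Omega evenShift = {xiB evenShift fun _ => 1} := by
  refine isOpen_constOneNbhd.inter_closure_eq_singleton (Set.Subset.antisymm ?_ ?_)
  · rintro _ ⟨hξ, x, -, rfl⟩
    rw [xiB_mem_constOneNbhd_iff.mp hξ]
    rfl
  · rintro _ rfl
    exact ⟨xiB_mem_constOneNbhd_iff.mpr rfl, _, const_one_mem_evenShift, rfl⟩

end EvenShift

/-- for the even shift, `{ξ_{1^∞}}` is open in `Ω_X`, it is a fixed point
of the spectral partial action for the generator `1`, and consequently the spectral
partial action is not topologically free. -/
theorem evenShift_not_topFree :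
    (∃ U : Set (FreeGroup (Fin 2) → Bool), IsOpen U ∧
        U ∩ Omega evenShift = {xiB evenShift (fun _ => (1 : Fin 2))}) ∧
    xiB evenShift (fun _ => (1 : Fin 2)) (FreeGroup.of (1 : Fin 2))⁻¹ = true ∧
    translate (FreeGroup.of (1 : Fin 2)) (xiB evenShift (fun _ => (1 : Fin 2))) =
      xiB evenShift (fun _ => (1 : Fin 2)) ∧
    ¬ TopFree evenShift := by
  have hdom := xiB_eq_true_iff.mpr (of_inv_mem_xiSet_const const_one_mem_evenShift)
  have hfix := translate_of_xiB_const const_one_mem_evenShift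
  exact ⟨⟨constOneNbhd, isOpen_constOneNbhd, constOneNbhd_inter_omega⟩, hdom, hfix,
    not_topFree_of_isolated_fixedPoint isOpen_constOneNbhd constOneNbhd_inter_omega
      (FreeGroup.of_ne_one 1) hdom hfix⟩

end SubshiftPaper
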